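/- Let F be a regular flow on ℝ² and let s₁, s₂ be two distinct inseparable orbits of F. Then no orbit of F separates s₁ from s₂: there is no orbit γ of F, disjoint from s₁ and from s₂, such that s₁ and s₂ are contained in different connected components of ℝ² ∖ γ. -/

import Mathlib

/-!
Let `γ` be the separating orbit and `K`, `L` the components of `ℝ² ∖ γ` containing the two
orbits. Components of the complement of an orbit are saturated, hence so are the open sets
`int (K ∪ γ)` and `int (L ∪ γ)`. They contain `K` and `L`: in a flow box `γ` lies on a single
horizontal line, and a small ball minus a subset of a line, not containing its centre, is still
connected. Inseparability makes these two open sets meet, and since an orbit of a regular flow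
has empty interior, they meet off `γ`, forcing `K = L`.
-/

open Set Filter Topology

/-- A (continuous-time) flow on a topological space. -/
def IsFlow {X : Type*} [TopologicalSpace X] (F : ℝ → X → X) : Prop :=
  Continuous (fun q : ℝ × X => F q.1 q.2) ∧ (∀ x, F 0 x = x) ∧
    ∀ t s x, F t (F s x) = F (t + s) x

/-- The forward orbit O⁺(p). -/
def fwdOrbit {X : Type*} (F : ℝ → X → X) (p : X) : Set X :=
  {q | ∃ t : ℝ, 0 ≤ t ∧ F t p = q}

/-- The backward orbit O⁻(p). -/
def bwdOrbit {X : Type*} (F : ℝ → X → X) (p : X) : Set X :=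
  {q | ∃ t : ℝ, t ≤ 0 ∧ F t p = q}

/-- The orbit O(p) = O⁻(p) ∪ O⁺(p). -/
def flowOrbit {X : Type*} (F : ℝ → X → X) (p : X) : Set X :=
  bwdOrbit F p ∪ fwdOrbit F p

/-- The orbit relation O_F. -/
def orbitRel {X : Type*} (F : ℝ → X → X) : Set (X × X) :=
  {z | z.2 ∈ fwdOrbit F z.1}

/-- The prolongational relation P_F: the closure of the orbit relation. -/
def prolongRel {X : Type*} [TopologicalSpace X] (F : ℝ → X → X) : Set (X × X) :=
  closure (orbitRel F)

/-- Down(p) = {q | (p,q) ∈ P_F}. -/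
def downSet {X : Type*} [TopologicalSpace X] (F : ℝ → X → X) (p : X) : Set X :=
  {q | (p, q) ∈ prolongRel F}

/-- The first prolongational limit set Λ¹(p). -/
def lambda1 {X : Type*} [MetricSpace X] (F : ℝ → X → X) (p : X) : Set X :=
  {q | ∀ ε > (0 : ℝ), ∀ T > (0 : ℝ), ∃ x : X, ∃ t : ℝ,
    T ≤ t ∧ dist x p < ε ∧ dist (F t x) q < ε}

/-- The first prolongation D¹(p). -/
def prolong1 {X : Type*} [MetricSpace X] (F : ℝ → X → X) (p : X) : Set X :=
  {q | ∀ ε > (0 : ℝ), ∃ x : X, ∃ t : ℝ, 0 < t ∧ dist x p < ε ∧ dist (F t x) q < ε}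

/-- The set NW_F of non-wandering points. -/
def nonWanderingSet {X : Type*} [MetricSpace X] (F : ℝ → X → X) : Set X :=
  {p | p ∈ lambda1 F p}

/-- A flow is wandering when it has no non-wandering point. -/
def IsWandering {X : Type*} [MetricSpace X] (F : ℝ → X → X) : Prop :=
  nonWanderingSet F = ∅

/-- The ω-limit set of p. -/
def omegaLimitSet {X : Type*} [TopologicalSpace X] (F : ℝ → X → X) (p : X) : Set X :=
  {q | ∃ t : ℕ → ℝ, Tendsto t atTop atTop ∧ Tendsto (fun n => F (t n) p) atTop (𝓝 q)}

/-- The α-limit set of p. -/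
def alphaLimitSet {X : Type*} [TopologicalSpace X] (F : ℝ → X → X) (p : X) : Set X :=
  {q | ∃ t : ℕ → ℝ, Tendsto t atTop atBot ∧ Tendsto (fun n => F (t n) p) atTop (𝓝 q)}

/-- The plane with the Euclidean distance. -/
abbrev Plane := EuclideanSpace ℝ (Fin 2)

/-- A flow on the plane is regular if near every point it is locally topologically
equivalent to the flow of a constant vector field: there is a homeomorphism of a
neighborhood onto an open set sending the local orbits into horizontal lines. -/
def IsRegularFlow (F : ℝ → Plane → Plane) : Prop :=
  ∀ p : Plane, ∃ U V : Set Plane, IsOpen U ∧ IsOpen V ∧ p ∈ U ∧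
    ∃ φ : U ≃ₜ V, ∀ q y : U, (y : Plane) ∈ flowOrbit F (q : Plane) →
      (φ y : Plane) 1 = (φ q : Plane) 1

/-- A set is saturated if it contains the full orbit of each of its points. -/
def FlowSaturated (F : ℝ → Plane → Plane) (A : Set Plane) : Prop :=
  ∀ p ∈ A, flowOrbit F p ⊆ A

/-- Two (distinct) orbits are inseparable if any two saturated open sets containing
them respectively must intersect. -/
def OrbitsInseparable (F : ℝ → Plane → Plane) (s₁ s₂ : Set Plane) : Prop :=
  ∀ U₁ U₂ : Set Plane, IsOpen U₁ → IsOpen U₂ → FlowSaturated F U₁ → FlowSaturated F U₂ →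
    s₁ ⊆ U₁ → s₂ ⊆ U₂ → (U₁ ∩ U₂).Nonempty

/-- s is an orbit of F. -/
def IsOrbit (F : ℝ → Plane → Plane) (s : Set Plane) : Prop :=
  ∃ a : Plane, s = flowOrbit F a

/-- A separatrix: an orbit inseparable from some other orbit. -/
def IsSeparatrix (F : ℝ → Plane → Plane) (s : Set Plane) : Prop :=
  IsOrbit F s ∧ ∃ s' : Set Plane, IsOrbit F s' ∧ s' ≠ s ∧ OrbitsInseparable F s s'

/-- s₁ ≻ s₂ : the distinct inseparable orbits s₁, s₂ satisfy (p,q) ∈ P_F for some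
p ∈ s₁, q ∈ s₂. -/
def OrbPrec (F : ℝ → Plane → Plane) (s₁ s₂ : Set Plane) : Prop :=
  s₁ ≠ s₂ ∧ OrbitsInseparable F s₁ s₂ ∧ ∃ p ∈ s₁, ∃ q ∈ s₂, (p, q) ∈ prolongRel F

/-- γ separates A from B: γ is disjoint from A and B, and A and B lie in different
connected components of the complement of γ. -/
def SeparatesSets (γ A B : Set Plane) : Prop :=
  γ ∩ A = ∅ ∧ γ ∩ B = ∅ ∧
    ∀ x ∈ A, ∀ y ∈ B, connectedComponentIn γᶜ x ≠ connectedComponentIn γᶜ y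

open Metric

section HalfSpace

variable {E : Type*} [AddCommGroup E] [Module ℝ E] [TopologicalSpace E] [ContinuousAdd E]
  [ContinuousSMul ℝ E]

theorem Convex.isPreconnected_inter_halfSpace_diff {s Z : Set E} {ℓ : E →ₗ[ℝ] ℝ} {c : ℝ}
    {p : E} (hs : Convex ℝ s) (hp : p ∈ s) (hpc : c < ℓ p) (hZ : Z ⊆ ℓ ⁻¹' {c}) :
    IsPreconnected ((s ∩ {w | c ≤ ℓ w}) \ Z) := by
  -- A segment from `p` meets the level `ℓ = c` at most at its other endpoint.
  have hstar : StarConvex ℝ p ((s ∩ {w | c ≤ ℓ w}) \ Z) := by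
    rintro y ⟨⟨hys, hyc⟩, hyZ⟩ a b ha hb hab
    have hyc : c ≤ ℓ y := hyc
    have hc : c = a * c + b * c := by rw [← add_mul, hab, one_mul]
    have hℓ : ℓ (a • p + b • y) = a * ℓ p + b * ℓ y := by simp
    refine ⟨⟨hs hp hys ha hb hab, ?_⟩, fun hZab => ?_⟩
    · show c ≤ ℓ (a • p + b • y)
      rw [hℓ]
      nlinarith [mul_nonneg ha (sub_nonneg.2 hpc.le), mul_nonneg hb (sub_nonneg.2 hyc)]
    rcases ha.eq_or_lt with rfl | ha
    · obtain rfl : b = 1 := by linarith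
      simp only [zero_smul, one_smul, zero_add] at hZab
      exact hyZ hZab
    · have hlev : a * ℓ p + b * ℓ y = c := hℓ ▸ hZ hZab
      nlinarith [mul_pos ha (sub_pos.2 hpc), mul_nonneg hb (sub_nonneg.2 hyc)]
  exact (hstar.isPathConnected ⟨⟨hp, hpc.le⟩, fun h => hpc.ne' (hZ h)⟩).isConnected.isPreconnected

theorem ContinuousLinearMap.interior_preimage_singleton {ℓ : E →L[ℝ] ℝ} (hℓ : ℓ ≠ 0) (c : ℝ) :
    interior (ℓ ⁻¹' {c}) = ∅ := by
  rw [← (ℓ.isOpenMap_of_ne_zero hℓ).preimage_interior_eq_interior_preimage ℓ.continuous,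
    interior_singleton, preimage_empty]

end HalfSpace

theorem EuclideanSpace.proj_ne_zero {ι : Type*} [Fintype ι] [DecidableEq ι] (i : ι) :
    EuclideanSpace.proj (𝕜 := ℝ) i ≠ 0 := fun h => by
  simpa using congrArg (fun ℓ => ℓ (EuclideanSpace.single i (1 : ℝ))) h

theorem exists_isOpen_isPreconnected_diff_of_subset_preimage_singleton {E : Type*}
    [NormedAddCommGroup E] [NormedSpace ℝ E] {ℓ : E →L[ℝ] ℝ} (hℓ : ℓ ≠ 0) {c : ℝ} {Z : Set E}
    (hZ : Z ⊆ ℓ ⁻¹' {c}) {ζ : E} (hζ : ζ ∉ Z) {V : Set E} (hV : V ∈ 𝓝 ζ) :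
    ∃ O, IsOpen O ∧ ζ ∈ O ∧ O ⊆ V ∧ IsPreconnected (O \ Z) := by
  by_cases hζc : ℓ ζ = c
  · obtain ⟨r, hr, hrV⟩ := Metric.mem_nhds_iff.1 hV
    refine ⟨ball ζ r, isOpen_ball, mem_ball_self hr, hrV, ?_⟩
    have himage : ℓ '' ball ζ r ∈ 𝓝 c := hζc ▸
      (ℓ.isOpenMap_of_ne_zero hℓ _ isOpen_ball).mem_nhds (mem_image_of_mem ℓ (mem_ball_self hr))
    obtain ⟨l, u, ⟨hl, hu⟩, hlu⟩ := mem_nhds_iff_exists_Ioo_subset.1 himage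
    obtain ⟨y₁, hcy₁, hy₁u⟩ := exists_between hu
    obtain ⟨y₂, hly₂, hy₂c⟩ := exists_between hl
    obtain ⟨p, hp, rfl⟩ := hlu ⟨hl.trans hcy₁, hy₁u⟩
    obtain ⟨q, hq, rfl⟩ := hlu ⟨hly₂, hy₂c.trans hu⟩
    have hup := (convex_ball ζ r).isPreconnected_inter_halfSpace_diff hp hcy₁ (ℓ := ℓ) hZ
    have hdown := (convex_ball ζ r).isPreconnected_inter_halfSpace_diff hq (ℓ := -ℓ) (c := -c)
      (by simpa using hy₂c) fun w hw => by simpa using hZ hw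
    have hsplit : ball ζ r \ Z =
        (ball ζ r ∩ {w | c ≤ ℓ w}) \ Z ∪ (ball ζ r ∩ {w | -c ≤ (-ℓ : E →ₗ[ℝ] ℝ) w}) \ Z := by
      ext w
      simp only [Set.mem_sdiff, mem_union, mem_inter_iff, mem_ofPred_eq, LinearMap.neg_apply,
        ContinuousLinearMap.coe_coe, neg_le_neg_iff]
      rcases le_total c (ℓ w) with h | h <;> tauto
    rw [hsplit]
    exact hup.union ζ ⟨⟨mem_ball_self hr, hζc.ge⟩, hζ⟩ ⟨⟨mem_ball_self hr, by simp [hζc]⟩, hζ⟩ hdown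
  · obtain ⟨r, hr, hrV⟩ := Metric.mem_nhds_iff.1
      (inter_mem hV ((isOpen_ne_fun ℓ.continuous continuous_const).mem_nhds hζc))
    refine ⟨ball ζ r, isOpen_ball, mem_ball_self hr, fun w hw => (hrV hw).1, ?_⟩
    rw [sdiff_eq_self_iff_disjoint.2 (disjoint_left.2 fun w hwZ hw => (hrV hw).2 (hZ hwZ))]
    exact (convex_ball ζ r).isPreconnected

section Orbits

variable {X : Type*} {F : ℝ → X → X}

theorem flowOrbit_eq_range (F : ℝ → X → X) (p : X) :
    flowOrbit F p = range fun t => F t p := by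
  ext q
  constructor
  · rintro (⟨t, -, rfl⟩ | ⟨t, -, rfl⟩) <;> exact ⟨t, rfl⟩
  · rintro ⟨t, rfl⟩
    rcases le_total t 0 with h | h
    exacts [Or.inl ⟨t, h, rfl⟩, Or.inr ⟨t, h, rfl⟩]

variable [TopologicalSpace X]

theorem IsFlow.mem_flowOrbit_self (hF : IsFlow F) (p : X) : p ∈ flowOrbit F p :=
  Or.inr ⟨0, le_rfl, hF.2.1 p⟩

theorem IsFlow.apply_apply_neg (hF : IsFlow F) (t : ℝ) (x : X) : F t (F (-t) x) = x := by
  rw [hF.2.2, add_neg_cancel, hF.2.1]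

theorem IsFlow.apply_neg_apply (hF : IsFlow F) (t : ℝ) (x : X) : F (-t) (F t x) = x := by
  simpa using hF.apply_apply_neg (-t) x

theorem IsFlow.flowOrbit_eq_of_mem (hF : IsFlow F) {p q : X} (hq : q ∈ flowOrbit F p) :
    flowOrbit F q = flowOrbit F p := by
  simp only [flowOrbit_eq_range] at hq ⊢
  obtain ⟨s, rfl⟩ := hq
  ext z
  constructor
  · rintro ⟨t, rfl⟩
    exact ⟨t + s, (hF.2.2 t s p).symm⟩
  · rintro ⟨t, rfl⟩
    exact ⟨t - s, show F (t - s) (F s p) = F t p by rw [hF.2.2, sub_add_cancel]⟩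

theorem IsFlow.isPreconnected_flowOrbit (hF : IsFlow F) (p : X) :
    IsPreconnected (flowOrbit F p) := by
  rw [flowOrbit_eq_range]
  exact isPreconnected_range (hF.1.comp (continuous_id.prodMk continuous_const))

end Orbits

section Saturation

variable {F : ℝ → Plane → Plane} {A B : Set Plane}

theorem IsFlow.flowSaturated_flowOrbit (hF : IsFlow F) (c : Plane) :
    FlowSaturated F (flowOrbit F c) :=
  fun _ hp => (hF.flowOrbit_eq_of_mem hp).subset

theorem FlowSaturated.compl (hF : IsFlow F) (hA : FlowSaturated F A) : FlowSaturated F Aᶜ :=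
  fun p hp q hq hqA => hp (hA q hqA (hF.flowOrbit_eq_of_mem hq ▸ hF.mem_flowOrbit_self p))

theorem FlowSaturated.union (hA : FlowSaturated F A) (hB : FlowSaturated F B) :
    FlowSaturated F (A ∪ B) := by
  rintro p (hp | hp)
  exacts [(hA p hp).trans subset_union_left, (hB p hp).trans subset_union_right]

theorem FlowSaturated.connectedComponentIn (hF : IsFlow F) (hA : FlowSaturated F A)
    (e : Plane) : FlowSaturated F (connectedComponentIn A e) := by
  intro p hp
  rw [connectedComponentIn_eq hp]
  exact (hF.isPreconnected_flowOrbit p).subset_connectedComponentIn (hF.mem_flowOrbit_self p)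
    (hA p (connectedComponentIn_subset A e hp))

theorem FlowSaturated.interior (hF : IsFlow F) (hA : FlowSaturated F A) :
    FlowSaturated F (interior A) := by
  intro p hp q hq
  rw [flowOrbit_eq_range] at hq
  obtain ⟨t, rfl⟩ := hq
  have hcont : Continuous (F (-t)) := hF.1.comp (continuous_const.prodMk continuous_id)
  refine interior_maximal (t := F (-t) ⁻¹' _root_.interior A) (fun y hy => ?_)
    (isOpen_interior.preimage hcont) ?_
  · have hy' : y ∈ flowOrbit F (F (-t) y) := by
      rw [flowOrbit_eq_range]
      exact ⟨t, hF.apply_apply_neg t y⟩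
    exact hA _ (interior_subset hy) hy'
  · show F (-t) (F t p) ∈ _root_.interior A
    rwa [hF.apply_neg_apply]

end Saturation

section Regular

variable {F : ℝ → Plane → Plane}

theorem IsRegularFlow.exists_flowBox (hreg : IsRegularFlow F) (hF : IsFlow F) (x c : Plane) :
    ∃ (V : Set Plane) (ψ : V → Plane) (ζ : V) (k : ℝ), IsOpen V ∧ IsOpenEmbedding ψ ∧
      ψ ζ = x ∧ Subtype.val '' (ψ ⁻¹' flowOrbit F c) ⊆ EuclideanSpace.proj 1 ⁻¹' {k} := by
  obtain ⟨U, V, hU, hV, hxU, φ, hφ⟩ := hreg x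
  obtain ⟨k, hk⟩ : ∃ k : ℝ, ∀ y : U, (y : Plane) ∈ flowOrbit F c → (φ y : Plane) 1 = k := by
    by_cases h : ∃ q : U, (q : Plane) ∈ flowOrbit F c
    · obtain ⟨q, hq⟩ := h
      exact ⟨(φ q : Plane) 1, fun y hy => hφ q y (hF.flowOrbit_eq_of_mem hq ▸ hy)⟩
    · exact ⟨0, fun y hy => absurd ⟨y, hy⟩ h⟩
  refine ⟨V, fun z => φ.symm z, φ ⟨x, hxU⟩, k, hV,
    hU.isOpenEmbedding_subtypeVal.comp φ.symm.isOpenEmbedding, by simp, ?_⟩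
  rintro _ ⟨z, hz, rfl⟩
  simpa using hk _ hz

theorem IsRegularFlow.interior_flowOrbit_eq_empty (hreg : IsRegularFlow F) (hF : IsFlow F) (c : Plane) :
    interior (flowOrbit F c) = ∅ := by
  refine eq_empty_iff_forall_notMem.2 fun m hm => ?_
  obtain ⟨V, ψ, ζ, k, hV, hψ, rfl, hline⟩ := hreg.exists_flowBox hF m c
  have hsub : Subtype.val '' (ψ ⁻¹' interior (flowOrbit F c)) ⊆
      interior (EuclideanSpace.proj 1 ⁻¹' {k}) :=
    interior_maximal ((image_mono (preimage_mono interior_subset)).trans hline)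
      (hV.isOpenMap_subtype_val _ (isOpen_interior.preimage hψ.continuous))
  rw [(EuclideanSpace.proj 1).interior_preimage_singleton (EuclideanSpace.proj_ne_zero 1)] at hsub
  exact hsub ⟨ζ, hm, rfl⟩

theorem IsRegularFlow.connectedComponentIn_subset_interior (hreg : IsRegularFlow F)
    (hF : IsFlow F) (c e : Plane) :
    connectedComponentIn (flowOrbit F c)ᶜ e ⊆
      interior (connectedComponentIn (flowOrbit F c)ᶜ e ∪ flowOrbit F c) := by
  intro x hx
  have hxγ : x ∉ flowOrbit F c := connectedComponentIn_subset _ _ hx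
  rw [connectedComponentIn_eq hx]
  obtain ⟨V, ψ, ζ, k, hV, hψ, rfl, hline⟩ := hreg.exists_flowBox hF x c
  set Z := Subtype.val '' (ψ ⁻¹' flowOrbit F c)
  have hζZ : (ζ : Plane) ∉ Z := by
    rintro ⟨z, hz, hzζ⟩
    exact hxγ (Subtype.ext hzζ ▸ hz)
  obtain ⟨O, hO, hζO, hOV, hOZ⟩ := exists_isOpen_isPreconnected_diff_of_subset_preimage_singleton
    (EuclideanSpace.proj_ne_zero 1) hline hζZ (hV.mem_nhds ζ.2)
  have hpre : IsPreconnected (ψ '' (Subtype.val ⁻¹' O) \ flowOrbit F c) := by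
    rw [← image_sdiff_preimage, ← Subtype.val_injective.preimage_image (ψ ⁻¹' _), ← preimage_sdiff]
    refine IsPreconnected.image ?_ ψ hψ.continuous.continuousOn
    rwa [← IsInducing.subtypeVal.isPreconnected_image,
      image_preimage_eq_of_subset (sdiff_subset.trans (hOV.trans Subtype.range_coe.superset))]
  refine mem_interior.2 ⟨ψ '' (Subtype.val ⁻¹' O), fun y hy => ?_,
    hψ.isOpenMap _ (hO.preimage continuous_subtype_val), mem_image_of_mem ψ hζO⟩
  by_cases hyγ : y ∈ flowOrbit F c
  · exact Or.inr hyγ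
  · exact Or.inl (hpre.subset_connectedComponentIn ⟨mem_image_of_mem ψ hζO, hxγ⟩
      (fun w hw => hw.2) ⟨hy, hyγ⟩)

end Regular

theorem stmt_13_general (F : ℝ → Plane → Plane) (hF : IsFlow F) (hreg : IsRegularFlow F)
    (a b : Plane)
    (hins : OrbitsInseparable F (flowOrbit F a) (flowOrbit F b)) :
    ¬ ∃ c : Plane, SeparatesSets (flowOrbit F c) (flowOrbit F a) (flowOrbit F b) := by
  rintro ⟨c, hγa, hγb, hsep⟩
  set γ := flowOrbit F c
  have hγsat : FlowSaturated F γᶜ := (hF.flowSaturated_flowOrbit c).compl hF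
  have hUsat (e : Plane) : FlowSaturated F (interior (connectedComponentIn γᶜ e ∪ γ)) :=
    ((hγsat.connectedComponentIn hF e).union (hF.flowSaturated_flowOrbit c)).interior hF
  have hU (e : Plane) (he : e ∉ γ) : flowOrbit F e ⊆ interior (connectedComponentIn γᶜ e ∪ γ) :=
    (hγsat.connectedComponentIn hF e e (mem_connectedComponentIn he)).trans
      (hreg.connectedComponentIn_subset_interior hF c e)
  have haγ : a ∉ γ := fun h => hγa.subset ⟨h, hF.mem_flowOrbit_self a⟩
  have hbγ : b ∉ γ := fun h => hγb.subset ⟨h, hF.mem_flowOrbit_self b⟩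
  obtain ⟨z, hz⟩ := hins _ _ isOpen_interior isOpen_interior (hUsat a) (hUsat b) (hU a haγ)
    (hU b hbγ)
  obtain ⟨w, ⟨hwa, hwb⟩, hwγ⟩ : ∃ w ∈ interior (connectedComponentIn γᶜ a ∪ γ) ∩
      interior (connectedComponentIn γᶜ b ∪ γ), w ∉ γ := by
    refine not_subset.1 fun h => ?_
    have := interior_maximal h (isOpen_interior.inter isOpen_interior) hz
    rwa [hreg.interior_flowOrbit_eq_empty hF c] at this
  have hwK : w ∈ connectedComponentIn γᶜ a := (interior_subset hwa).resolve_right hwγ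
  have hwL : w ∈ connectedComponentIn γᶜ b := (interior_subset hwb).resolve_right hwγ
  exact hsep a (hF.mem_flowOrbit_self a) b (hF.mem_flowOrbit_self b)
    ((connectedComponentIn_eq hwK).trans (connectedComponentIn_eq hwL).symm)

/-- No orbit of a regular planar flow separates two inseparable orbits. -/
theorem stmt_13 (F : ℝ → Plane → Plane) (hF : IsFlow F) (hreg : IsRegularFlow F)
    (a b : Plane) (hne : flowOrbit F a ≠ flowOrbit F b)
    (hins : OrbitsInseparable F (flowOrbit F a) (flowOrbit F b)) :
    ¬ ∃ c : Plane, SeparatesSets (flowOrbit F c) (flowOrbit F a) (flowOrbit F b) :=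
  stmt_13_general F hF hreg a b hins
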